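/- arXiv:math/0010058 — 3 statements merged into one kernel-verified Lean document; each statement's English description precedes it below -/
import Mathlib

section
/- Let E be a finite-dimensional inner product space, L : E → E symmetric positive definite, R ⊆ E an L-invariant subspace with orthogonal projection P : E → R satisfying L ∘ P = P ∘ L. Then for any subspace F ⊆ E with dim F = dim R and F ∩ R^⊥ = {0}: |det(L|_R)| · |det(P|_F)| = |det(P|_{L(F)})| · |det(L|_F)| ≤ |det(L|_F)|. -/
open scoped RealInnerProductSpace
open Module

/-- `|det L|` for a linear map between finite-dimensional real inner product spaces. -/
noncomputable def absDet {E F : Type*} [NormedAddCommGroup E] [InnerProductSpace ℝ E]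
    [NormedAddCommGroup F] [InnerProductSpace ℝ F] [FiniteDimensional ℝ E]
    (L : E →ₗ[ℝ] F) : ℝ :=
  Real.sqrt (Matrix.det (Matrix.of fun i j =>
    ⟪L (stdOrthonormalBasis ℝ E i), L (stdOrthonormalBasis ℝ E j)⟫))

/-!
Because `P` commutes with `L`, the maps `(L|_R) ∘ (P|_F)` and `(P|_{L(F)}) ∘ (L|_F)` from `F`
have the same Gram matrices, so the identity is multiplicativity of `|det|` (for maps between
spaces of equal dimension) applied to both factorizations. The inequality holds because `P` is
a contraction, and the Gram matrix of a contraction on an orthonormal basis is `≤ 1` in the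
Loewner order, so its eigenvalues, hence its determinant, are at most `1`.
-/

section

open Matrix MatrixOrder

theorem Matrix.PosSemidef.det_le_one {n : Type*} [Fintype n] [DecidableEq n]
    {G : Matrix n n ℝ} (hG : G.PosSemidef) (hG₁ : G ≤ 1) : G.det ≤ 1 := by
  rw [hG.isHermitian.det_eq_prod_eigenvalues]
  refine Finset.prod_le_one (fun i _ => hG.eigenvalues_nonneg i) fun i _ => ?_
  have hspec := (le_algebraMap_iff_spectrum_le (r := (1 : ℝ)) hG.isHermitian).mp
    (by simpa using hG₁)
  exact hspec _ (hG.isHermitian.eigenvalues_mem_spectrum_real i)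

theorem Matrix.gram_comp_eq_transpose_mul_gram_mul {Y Z ι κ : Type*}
    [NormedAddCommGroup Y] [InnerProductSpace ℝ Y] [NormedAddCommGroup Z] [InnerProductSpace ℝ Z]
    [Fintype κ] (f : OrthonormalBasis κ ℝ Y) (A : Y →ₗ[ℝ] Z) (v : ι → Y) :
    letI N := of fun k i => f.repr (v i) k
    gram ℝ (A ∘ v) = Nᵀ * gram ℝ (A ∘ f) * N := by
  ext i j
  have expand : ∀ i, A (v i) = ∑ k, f.repr (v i) k • A (f k) := fun i => by
    conv_lhs => rw [← f.sum_repr (v i)]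
    simp only [map_sum, map_smul]
  simp only [gram_apply, Function.comp_apply, mul_apply, transpose_apply, of_apply]
  rw [expand i, expand j]
  simp only [sum_inner, inner_sum, real_inner_smul_left, real_inner_smul_right, Finset.sum_mul]
  refine Finset.sum_congr rfl fun l _ => Finset.sum_congr rfl fun k _ => by ring

variable {X Y Z : Type*} [NormedAddCommGroup X] [InnerProductSpace ℝ X]
  [NormedAddCommGroup Y] [InnerProductSpace ℝ Y] [NormedAddCommGroup Z] [InnerProductSpace ℝ Z]
  [FiniteDimensional ℝ X]

theorem absDet_eq_sqrt_det_gram (T : X →ₗ[ℝ] Y) :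
    absDet T = √(gram ℝ (T ∘ stdOrthonormalBasis ℝ X)).det := rfl

theorem absDet_nonneg (T : X →ₗ[ℝ] Y) : 0 ≤ absDet T := Real.sqrt_nonneg _

theorem absDet_eq_of_inner_eq (T₁ : X →ₗ[ℝ] Y) (T₂ : X →ₗ[ℝ] Z)
    (h : ∀ x y, ⟪T₁ x, T₁ y⟫ = ⟪T₂ x, T₂ y⟫) : absDet T₁ = absDet T₂ := by
  simp only [absDet, h]

theorem absDet_le_one (T : X →L[ℝ] Y) (hT : ‖T‖ ≤ 1) : absDet (T : X →ₗ[ℝ] Y) ≤ 1 := by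
  set e := stdOrthonormalBasis ℝ X
  have hgram : gram ℝ (T ∘ e) ≤ ‖T‖ ^ 2 • 1 := by
    simpa [le_iff, gram_eq_one_iff_orthonormal.mpr e.orthonormal]
      using posSemidef_opNorm_smul_gram_sub_gram e T
  have hscalar : ‖T‖ ^ 2 • (1 : Matrix (Fin (finrank ℝ X)) (Fin (finrank ℝ X)) ℝ) ≤ 1 := by
    rw [le_iff, show (1 : Matrix _ _ ℝ) - ‖T‖ ^ 2 • 1 = (1 - ‖T‖ ^ 2) • 1 by
      rw [sub_smul, one_smul]]
    exact PosSemidef.one.smul (sub_nonneg.mpr (pow_le_one₀ (norm_nonneg T) hT))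
  have hdet := (posSemidef_gram ℝ (T ∘ e)).det_le_one (hgram.trans hscalar)
  rw [absDet_eq_sqrt_det_gram]
  exact Real.sqrt_le_one.mpr hdet

theorem absDet_comp [FiniteDimensional ℝ Y] (A : Y →ₗ[ℝ] Z) (B : X →ₗ[ℝ] Y)
    (h : finrank ℝ X = finrank ℝ Y) : absDet (A ∘ₗ B) = absDet A * absDet B := by
  simp only [absDet_eq_sqrt_det_gram]
  set e := stdOrthonormalBasis ℝ X
  set c := finCongr h
  -- reindexing the basis of `Y` like that of `X` makes the matrix `N` of `B` square
  set f := (stdOrthonormalBasis ℝ Y).reindex c.symm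
  set N := of fun k i => f.repr (B (e i)) k
  have hAB : gram ℝ ((A ∘ₗ B) ∘ e) = Nᵀ * gram ℝ (A ∘ f) * N :=
    gram_comp_eq_transpose_mul_gram_mul f A (B ∘ e)
  have hB : gram ℝ (B ∘ e) = Nᵀ * N := by
    simpa using gram_eq_conjTranspose_mul f (B ∘ e)
  have hA : gram ℝ (A ∘ f) = (gram ℝ (A ∘ stdOrthonormalBasis ℝ Y)).submatrix c c := by
    ext i j
    simp [f]
  rw [hAB, hB, hA, det_mul, det_mul, det_mul, det_transpose, det_submatrix_equiv_self,
    mul_comm N.det, mul_assoc, Real.sqrt_mul (posSemidef_gram ℝ _).det_nonneg]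

end

theorem det_proj_commute_ineq_general
    {E : Type*} [NormedAddCommGroup E] [InnerProductSpace ℝ E] [FiniteDimensional ℝ E]
    (L : E →ₗ[ℝ] E)
    (hLpos : ∀ x : E, x ≠ 0 → 0 < ⟪L x, x⟫)
    (R : Submodule ℝ E)
    (hcomm : L ∘ₗ (R.subtype ∘ₗ R.orthogonalProjection.toLinearMap) =
      (R.subtype ∘ₗ R.orthogonalProjection.toLinearMap) ∘ₗ L)
    (F : Submodule ℝ E)
    (hdim : finrank ℝ F = finrank ℝ R) :
    absDet (L ∘ₗ R.subtype) * absDet (R.orthogonalProjection.toLinearMap ∘ₗ F.subtype) =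
        absDet (R.orthogonalProjection.toLinearMap ∘ₗ (F.map L).subtype) *
          absDet (L ∘ₗ F.subtype) ∧
      absDet (R.orthogonalProjection.toLinearMap ∘ₗ (F.map L).subtype) *
          absDet (L ∘ₗ F.subtype) ≤ absDet (L ∘ₗ F.subtype) := by
  set P := R.orthogonalProjection
  have hLinj : Function.Injective L := by
    rw [← LinearMap.ker_eq_bot, LinearMap.ker_eq_bot']
    intro x hx
    by_contra hx₀
    simpa [hx] using hLpos x hx₀
  have hLP (x : E) : L (P x) = P (L x) := LinearMap.congr_fun hcomm x
  set LF := Submodule.equivMapOfInjective L hLinj F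
  have hPL : absDet (P.toLinearMap ∘ₗ (F.map L).subtype) ≤ 1 :=
    absDet_le_one (P ∘L (F.map L).subtypeL) <|
      (P.opNorm_comp_le _).trans <| mul_le_one₀ R.orthogonalProjectionOnto_norm_le (norm_nonneg _)
        (Submodule.norm_subtypeL_le _)
  refine ⟨?_, mul_le_of_le_one_left (absDet_nonneg _) hPL⟩
  calc absDet (L ∘ₗ R.subtype) * absDet (P.toLinearMap ∘ₗ F.subtype)
      = absDet ((L ∘ₗ R.subtype) ∘ₗ P.toLinearMap ∘ₗ F.subtype) := (absDet_comp _ _ hdim).symm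
    _ = absDet ((P.toLinearMap ∘ₗ (F.map L).subtype) ∘ₗ LF.toLinearMap) :=
        absDet_eq_of_inner_eq _ _ fun x y => by simp [LF, hLP]
    _ = absDet (P.toLinearMap ∘ₗ (F.map L).subtype) * absDet LF.toLinearMap :=
        absDet_comp _ _ LF.finrank_eq
    _ = absDet (P.toLinearMap ∘ₗ (F.map L).subtype) * absDet (L ∘ₗ F.subtype) := by
        rw [absDet_eq_of_inner_eq LF.toLinearMap (L ∘ₗ F.subtype) fun _ _ => rfl]

/-- For `L` symmetric positive definite, `R` an `L`-invariant subspace whose orthogonal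
projection `P` commutes with `L`, and `F` of the same dimension as `R` with
`F ∩ Rᗮ = {0}`:  `|det(L|_R)|·|det(P|_F)| = |det(P|_{L(F)})|·|det(L|_F)| ≤ |det(L|_F)|`. -/
theorem det_proj_commute_ineq
    {E : Type*} [NormedAddCommGroup E] [InnerProductSpace ℝ E] [FiniteDimensional ℝ E]
    (L : E →ₗ[ℝ] E)
    (hLsym : ∀ x y : E, ⟪L x, y⟫ = ⟪x, L y⟫)
    (hLpos : ∀ x : E, x ≠ 0 → 0 < ⟪L x, x⟫)
    (R : Submodule ℝ E)
    (hRinv : R.map L = R)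
    (hcomm : L ∘ₗ (R.subtype ∘ₗ R.orthogonalProjection.toLinearMap) =
      (R.subtype ∘ₗ R.orthogonalProjection.toLinearMap) ∘ₗ L)
    (F : Submodule ℝ E)
    (hdim : finrank ℝ F = finrank ℝ R)
    (htrans : F ⊓ Rᗮ = ⊥) :
    absDet (L ∘ₗ R.subtype) * absDet (R.orthogonalProjection.toLinearMap ∘ₗ F.subtype) =
        absDet (R.orthogonalProjection.toLinearMap ∘ₗ (F.map L).subtype) *
          absDet (L ∘ₗ F.subtype) ∧
      absDet (R.orthogonalProjection.toLinearMap ∘ₗ (F.map L).subtype) *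
          absDet (L ∘ₗ F.subtype) ≤ absDet (L ∘ₗ F.subtype) :=
  det_proj_commute_ineq_general L hLpos R hcomm F hdim
end

section
/- Let E be a 2n-1 dimensional inner product space decomposed orthogonally as E = ⟨X⟩ ⊕ T with X a unit vector. Let A : E → E be a linear map with A(X) = X and A(T) = T. Then ex(A) = ex(A|_T), where ex denotes the maximal |det| of the restriction to a subspace. -/
open scoped RealInnerProductSpace
open Module

/-- The expansion of a linear map: the supremum over all subspaces of the source of the
absolute determinant of the restriction (the trivial subspace gives value 1). -/
noncomputable def expansion {E F : Type*} [NormedAddCommGroup E] [InnerProductSpace ℝ E]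
    [NormedAddCommGroup F] [InnerProductSpace ℝ F] [FiniteDimensional ℝ E]
    (L : E →ₗ[ℝ] F) : ℝ :=
  ⨆ S : Submodule ℝ E, absDet (L ∘ₗ S.subtype)

/-!
`absDet` is `LinearMap.normDet`, and for every finite family `c` the Gram matrices satisfy
`det G(f ∘ c) = normDet(f|span c)² · det G(c)`. Let `T = Xᗮ` and `R = ex(A|_T)`. A subspace
`S ⊄ T` has a basis `(b, v)` with `b` spanning `S ∩ T`; write `v = y + w` with `y ∈ ⟨X⟩`, `w ∈ T`.
Since `y = A y` is orthogonal to `T ⊇ A(T)`,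
  `det G(Ab, Av) = det G(Ab, Aw) + ‖y‖² det G(Ab)` and `det G(b, v) = det G(b, w) + ‖y‖² det G(b)`,
while on the families `(b, w)` and `b`, which lie in `T`, `A` multiplies Gram determinants by at
most `R²`. Hence `normDet(A|_S) ≤ R`.
-/

open Matrix LinearMap Submodule

section NormDet

variable {U V W : Type*} [NormedAddCommGroup U] [InnerProductSpace ℝ U] [FiniteDimensional ℝ U]
  [NormedAddCommGroup V] [InnerProductSpace ℝ V] [NormedAddCommGroup W] [InnerProductSpace ℝ W]

theorem real_normDet_sq_eq_det_gram {ι : Type*} [Fintype ι] [DecidableEq ι] (f : U →ₗ[ℝ] V)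
    (b : OrthonormalBasis ι ℝ U) : f.normDet ^ 2 = (gram ℝ fun i => f (b i)).det := by
  simpa using f.normDet_sq_eq_det_gram b

theorem absDet_eq_normDet (f : U →ₗ[ℝ] V) : absDet f = f.normDet := by
  rw [absDet, ← Real.sqrt_sq f.normDet_nonneg,
    real_normDet_sq_eq_det_gram f (stdOrthonormalBasis ℝ U)]
  rfl

theorem expansion_eq_iSup_normDet (f : U →ₗ[ℝ] V) :
    expansion f = ⨆ S : Submodule ℝ U, (f ∘ₗ S.subtype).normDet := by
  simp only [expansion, absDet_eq_normDet]

theorem normDet_comp_of_range_eq (g : V →ₗ[ℝ] W) (f : U →ₗ[ℝ] V) {p : Submodule ℝ V}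
    [FiniteDimensional ℝ p] (hp : range f = p) :
    (g ∘ₗ f).normDet = (g ∘ₗ p.subtype).normDet * f.normDet := by
  subst hp
  exact normDet_comp f g

theorem normDet_comp_linearIsometry (g : V →ₗ[ℝ] W) (f : U →ₗᵢ[ℝ] V) {p : Submodule ℝ V}
    [FiniteDimensional ℝ p] (hp : range f.toLinearMap = p) :
    (g ∘ₗ f.toLinearMap).normDet = (g ∘ₗ p.subtype).normDet := by
  rw [normDet_comp_of_range_eq g _ hp, LinearIsometry.normDet_eq_one, mul_one]

theorem normDet_comp_subtype_sq_le (f : U →ₗ[ℝ] V) (S : Submodule ℝ U) :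
    (f ∘ₗ S.subtype).normDet ^ 2 ≤
      (finrank ℝ U).factorial * max 1 (‖f.toContinuousLinearMap‖ ^ 2) ^ finrank ℝ U := by
  set C := max 1 (‖f.toContinuousLinearMap‖ ^ 2)
  set b := stdOrthonormalBasis ℝ S
  have hentry : ∀ i j, |gram ℝ (fun i => (f ∘ₗ S.subtype) (b i)) i j| ≤ C := fun i j => by
    have hb : ∀ i, ‖(f ∘ₗ S.subtype) (b i)‖ ≤ ‖f.toContinuousLinearMap‖ := fun i => by
      have hbi : ‖(b i : U)‖ = 1 := b.orthonormal.1 i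
      simpa [hbi] using f.toContinuousLinearMap.le_opNorm (b i : U)
    calc |gram ℝ (fun i => (f ∘ₗ S.subtype) (b i)) i j|
        ≤ ‖(f ∘ₗ S.subtype) (b i)‖ * ‖(f ∘ₗ S.subtype) (b j)‖ := abs_real_inner_le_norm _ _
      _ ≤ ‖f.toContinuousLinearMap‖ ^ 2 := by
          rw [sq]; exact mul_le_mul (hb i) (hb j) (norm_nonneg _) (norm_nonneg _)
      _ ≤ C := le_max_right _ _
  calc (f ∘ₗ S.subtype).normDet ^ 2
      ≤ |(gram ℝ (fun i => (f ∘ₗ S.subtype) (b i))).det| :=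
        (real_normDet_sq_eq_det_gram _ b).le.trans (le_abs_self _)
    _ ≤ (finrank ℝ S).factorial * C ^ finrank ℝ S := by
        simpa using det_le (abv := AbsoluteValue.abs) hentry
    _ ≤ (finrank ℝ U).factorial * C ^ finrank ℝ U := by
        have hC : 1 ≤ C := le_max_left _ _
        have hS : finrank ℝ S ≤ finrank ℝ U := S.finrank_le
        gcongr

-- Without this bound the `⨆` in `expansion` would be the junk value `0`.
theorem bddAbove_range_normDet_comp_subtype (f : U →ₗ[ℝ] V) :
    BddAbove (Set.range fun S : Submodule ℝ U => (f ∘ₗ S.subtype).normDet) :=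
  ⟨_, Set.forall_mem_range.mpr fun S => Real.le_sqrt_of_sq_le (normDet_comp_subtype_sq_le f S)⟩

theorem expansion_comp_linearIsometry_le [FiniteDimensional ℝ W] (f : U →ₗ[ℝ] V)
    (L : W →ₗᵢ[ℝ] U) : expansion (f ∘ₗ L.toLinearMap) ≤ expansion f := by
  rw [expansion_eq_iSup_normDet, expansion_eq_iSup_normDet]
  refine ciSup_le fun P => ?_
  exact (normDet_comp_linearIsometry f (L.comp P.subtypeₗᵢ) rfl).trans_le
    (le_ciSup (bddAbove_range_normDet_comp_subtype f) _)

theorem normDet_comp_subtype_le_expansion_comp [FiniteDimensional ℝ W] (f : U →ₗ[ℝ] V)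
    (L : W →ₗᵢ[ℝ] U) {Q : Submodule ℝ U} (hQ : Q ≤ range L.toLinearMap) :
    (f ∘ₗ Q.subtype).normDet ≤ expansion (f ∘ₗ L.toLinearMap) := by
  rw [expansion_eq_iSup_normDet]
  refine le_ciSup_of_le (bddAbove_range_normDet_comp_subtype _) (Q.comap L.toLinearMap) ?_
  have hrange : range (L.comp (Q.comap L.toLinearMap).subtypeₗᵢ).toLinearMap = Q := by
    change range (L.toLinearMap ∘ₗ (Q.comap L.toLinearMap).subtype) = Q
    rw [range_comp, range_subtype, map_comap_eq, inf_eq_right.mpr hQ]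
  exact (normDet_comp_linearIsometry f _ hrange).ge

end NormDet

section Gram

variable {U V : Type*} [NormedAddCommGroup U] [InnerProductSpace ℝ U] [FiniteDimensional ℝ U]
  [NormedAddCommGroup V] [InnerProductSpace ℝ V] {ι : Type*} [Fintype ι] [DecidableEq ι]

theorem det_gram_comp (f : U →ₗ[ℝ] V) (c : ι → U) :
    (gram ℝ (f ∘ c)).det =
      (f ∘ₗ (span ℝ (Set.range c)).subtype).normDet ^ 2 * (gram ℝ c).det := by
  let φ : EuclideanSpace ℝ ι →ₗ[ℝ] U :=
    Fintype.linearCombination ℝ c ∘ₗ (WithLp.linearEquiv 2 ℝ (ι → ℝ)).toLinearMap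
  have hφ : ∀ i, φ (EuclideanSpace.basisFun ι ℝ i) = c i := by simp [φ]
  have hrange : range φ = span ℝ (Set.range c) := by
    simp [φ, range_comp_of_range_eq_top _ (LinearEquiv.range _)]
  have hfφ := real_normDet_sq_eq_det_gram (f ∘ₗ φ) (EuclideanSpace.basisFun ι ℝ)
  have hφ' := real_normDet_sq_eq_det_gram φ (EuclideanSpace.basisFun ι ℝ)
  simp only [LinearMap.comp_apply, hφ] at hfφ hφ'
  rw [Function.comp_def, ← hfφ, ← hφ', normDet_comp_of_range_eq f φ hrange, mul_pow]

theorem det_gram_comp_le_of_normDet_le (f : U →ₗ[ℝ] V) (c : ι → U) {R : ℝ}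
    (hR : (f ∘ₗ (span ℝ (Set.range c)).subtype).normDet ≤ R) :
    (gram ℝ (f ∘ c)).det ≤ R ^ 2 * (gram ℝ c).det := by
  rw [det_gram_comp]
  gcongr
  · exact (posSemidef_gram ℝ c).det_nonneg
  · exact normDet_nonneg _

theorem normDet_le_of_det_gram_comp_le (f : U →ₗ[ℝ] V) {c : ι → U} (hc : LinearIndependent ℝ c)
    {R : ℝ} (hR : 0 ≤ R) (h : (gram ℝ (f ∘ c)).det ≤ R ^ 2 * (gram ℝ c).det) :
    (f ∘ₗ (span ℝ (Set.range c)).subtype).normDet ≤ R := by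
  have hpos : 0 < (gram ℝ c).det := (posSemidef_gram ℝ c).det_nonneg.lt_of_ne
    (det_gram_ne_zero_iff_linearIndependent.mpr hc).symm
  rw [det_gram_comp] at h
  exact (pow_le_pow_iff_left₀ (normDet_nonneg _) hR two_ne_zero).mp (le_of_mul_le_mul_right h hpos)

theorem det_gram_snoc_add {m : ℕ} (u : Fin m → V) {x y : V} (hu : ∀ i, ⟪u i, x⟫ = 0)
    (hy : ⟪y, x⟫ = 0) :
    (gram ℝ (Fin.snoc u (x + y) : Fin (m + 1) → V)).det =
      (gram ℝ (Fin.snoc u y : Fin (m + 1) → V)).det + ‖x‖ ^ 2 * (gram ℝ u).det := by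
  have hu' : ∀ i, ⟪x, u i⟫ = 0 := fun i => by rw [real_inner_comm, hu]
  have hy' : ⟪x, y⟫ = 0 := by rw [real_inner_comm, hy]
  set G := gram ℝ (Fin.snoc u y : Fin (m + 1) → V)
  have hG : gram ℝ (Fin.snoc u (x + y) : Fin (m + 1) → V) =
      G.updateRow (Fin.last m) (G (Fin.last m) + ‖x‖ ^ 2 • Pi.single (Fin.last m) 1) := by
    ext i j
    cases i using Fin.lastCases <;> cases j using Fin.lastCases <;>
      simp [G, gram_apply, updateRow_apply, inner_add_left, inner_add_right, hu, hu', hy',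
        norm_add_sq_real, add_comm, (Fin.castSucc_lt_last _).ne]
  have hminor : G.submatrix Fin.castSucc Fin.castSucc = gram ℝ u := by
    ext i j
    simp [G, gram_apply]
  rw [hG, det_updateRow_add, updateRow_eq_self, det_updateRow_smul, ← adjugate_apply,
    adjugate_fin_succ_eq_det_submatrix, Fin.succAbove_last, hminor,
    Even.neg_one_pow ⟨_, rfl⟩, one_mul]

end Gram

theorem exists_linearIndependent_snoc_span_eq {K M : Type*} [Field K] [AddCommGroup M]
    [Module K M] [FiniteDimensional K M] (φ : M →ₗ[K] K) {S : Submodule K M} {v : M}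
    (hvS : v ∈ S) (hv : φ v ≠ 0) :
    ∃ (m : ℕ) (b : Fin m → M), (∀ i, φ (b i) = 0) ∧
      LinearIndependent K (Fin.snoc b v : Fin (m + 1) → M) ∧
      span K (Set.range (Fin.snoc b v : Fin (m + 1) → M)) = S := by
  set P := S ⊓ ker φ
  set e := Module.finBasis K P
  have hspan : span K (Set.range (P.subtype ∘ e)) = P := by
    rw [Set.range_comp, span_image, e.span_eq, Submodule.map_top, range_subtype]
  refine ⟨_, P.subtype ∘ e, fun i => (e i).2.2, ?_, ?_⟩
  · refine (e.linearIndependent.map' P.subtype P.ker_subtype).finSnoc ?_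
    rw [hspan]
    exact fun h => hv h.2
  · rw [Fin.range_snoc, span_insert, hspan]
    refine le_antisymm (sup_le (span_singleton_le_iff_mem _ _ |>.mpr hvS) inf_le_left) ?_
    intro s hs
    have hsP : s - (φ s / φ v) • v ∈ P := ⟨S.sub_mem hs (S.smul_mem _ hvS), by simp [hv]⟩
    exact mem_sup.mpr ⟨_, mem_span_singleton.mpr ⟨φ s / φ v, rfl⟩, _, hsP, add_sub_cancel _ _⟩

theorem normDet_comp_subtype_le_of_le_on_orthogonal {E : Type*} [NormedAddCommGroup E]
    [InnerProductSpace ℝ E] [FiniteDimensional ℝ E] {X : E} {A : E →ₗ[ℝ] E} (hAX : A X = X)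
    (hAT : ∀ x ∈ (ℝ ∙ X)ᗮ, A x ∈ (ℝ ∙ X)ᗮ) {R : ℝ} (hR0 : 0 ≤ R)
    (hR : ∀ Q ≤ (ℝ ∙ X)ᗮ, (A ∘ₗ Q.subtype).normDet ≤ R) (S : Submodule ℝ E) :
    (A ∘ₗ S.subtype).normDet ≤ R := by
  by_cases hS : S ≤ (ℝ ∙ X)ᗮ
  · exact hR S hS
  obtain ⟨v, hvS, hvX⟩ := SetLike.not_le_iff_exists.mp hS
  obtain ⟨m, b, hbX, hind, rfl⟩ := exists_linearIndependent_snoc_span_eq (innerₛₗ ℝ X) hvS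
    (mt mem_orthogonal_singleton_iff_inner_right.mpr hvX)
  replace hbX : ∀ i, b i ∈ (ℝ ∙ X)ᗮ := fun i => mem_orthogonal_singleton_iff_inner_right.mpr (hbX i)
  refine normDet_le_of_det_gram_comp_le A hind hR0 ?_
  have hgram : ∀ {k} (c : Fin k → E), (∀ i, c i ∈ (ℝ ∙ X)ᗮ) →
      (gram ℝ (A ∘ c)).det ≤ R ^ 2 * (gram ℝ c).det := fun c hc =>
    det_gram_comp_le_of_normDet_le A c (hR _ (span_le.mpr (Set.range_subset_iff.mpr hc)))
  obtain ⟨y, hy, w, hw, rfl⟩ := (ℝ ∙ X).exists_add_mem_mem_orthogonal v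
  have hAy : A y = y := by
    obtain ⟨a, rfl⟩ := mem_span_singleton.mp hy
    rw [map_smul, hAX]
  have hyT : ∀ t ∈ (ℝ ∙ X)ᗮ, ⟪t, y⟫ = 0 := fun t ht => inner_left_of_mem_orthogonal hy ht
  have hbwX : ∀ i, (Fin.snoc b w : Fin (m + 1) → E) i ∈ (ℝ ∙ X)ᗮ :=
    Fin.lastCases (by simpa using hw) (by simpa using hbX)
  calc (gram ℝ (A ∘ Fin.snoc b (y + w))).det
      = (gram ℝ (Fin.snoc (A ∘ b) (y + A w))).det := by rw [Fin.comp_snoc, map_add, hAy]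
    _ = (gram ℝ (A ∘ Fin.snoc b w)).det + ‖y‖ ^ 2 * (gram ℝ (A ∘ b)).det := by
        rw [det_gram_snoc_add (A ∘ b) (fun i => hyT _ (hAT _ (hbX i))) (hyT _ (hAT _ hw)),
          Fin.comp_snoc]
    _ ≤ R ^ 2 * (gram ℝ (Fin.snoc b w)).det + ‖y‖ ^ 2 * (R ^ 2 * (gram ℝ b).det) := by
        gcongr
        exacts [hgram _ hbwX, hgram b hbX]
    _ = R ^ 2 * (gram ℝ (Fin.snoc b (y + w))).det := by
        rw [det_gram_snoc_add b (fun i => hyT _ (hbX i)) (hyT _ hw)]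
        ring

theorem expansion_eq_expansion_on_transversal_general
    {E : Type*} [NormedAddCommGroup E] [InnerProductSpace ℝ E] [FiniteDimensional ℝ E]
    (X : E)
    (A : E →ₗ[ℝ] E)
    (hAX : A X = X)
    (hAT : ((Submodule.span ℝ {X})ᗮ).map A = (Submodule.span ℝ {X})ᗮ) :
    expansion A = expansion (A ∘ₗ ((Submodule.span ℝ {X})ᗮ).subtype) := by
  set T := (ℝ ∙ X)ᗮ
  have hAT' : ∀ x ∈ T, A x ∈ T := fun x hx => hAT ▸ mem_map_of_mem hx
  change expansion A = expansion (A ∘ₗ T.subtypeₗᵢ.toLinearMap)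
  refine le_antisymm ?_ (expansion_comp_linearIsometry_le A T.subtypeₗᵢ)
  rw [expansion_eq_iSup_normDet A]
  refine ciSup_le fun S => normDet_comp_subtype_le_of_le_on_orthogonal hAX hAT' ?_ ?_ S
  · exact (normDet_nonneg _).trans (normDet_comp_subtype_le_expansion_comp A _ bot_le)
  · exact fun Q hQ => normDet_comp_subtype_le_expansion_comp A _ (by simpa using hQ)

/-- If `E = ⟨X⟩ ⊕ T` orthogonally with `X` a unit vector, `A X = X` and `A(T) = T`,
then `ex(A) = ex(A|_T)`. -/
theorem expansion_eq_expansion_on_transversal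
    {E : Type*} [NormedAddCommGroup E] [InnerProductSpace ℝ E] [FiniteDimensional ℝ E]
    {n : ℕ} (hE : finrank ℝ E = 2 * n - 1)
    (X : E) (hX : ‖X‖ = 1)
    (A : E →ₗ[ℝ] E)
    (hAX : A X = X)
    (hAT : ((Submodule.span ℝ {X})ᗮ).map A = (Submodule.span ℝ {X})ᗮ) :
    expansion A = expansion (A ∘ₗ ((Submodule.span ℝ {X})ᗮ).subtype) :=
  expansion_eq_expansion_on_transversal_general X A hAX hAT
end

section
/- Let E be a 2n-dimensional inner product space and φ : E → E an invertible linear map. Then there exists a Lagrangian-dimension subspace R ⊆ E with dim R = n such that |det(φ|_R)| = ex(φ), where ex(φ) = max over all subspaces S ⊆ E of |det(φ|_S)|, provided E carries a compatible symplectic form ω and complex structure J with φ symplectic; moreover R can be taken Lagrangian. -/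
open scoped RealInnerProductSpace
open Module

/-!
Write `A = φ† φ`, with orthonormal eigenbasis `bᵢ` and eigenvalues `μᵢ ≥ 0`. On an orthonormal
basis of any subspace `S`, the Gram matrix of `φ` is `Mᴴ diag(μ) M` with `Mᴴ M = 1`, and its
determinant is at most `∏ max 1 μᵢ`. Since `ω x y = -⟪x, J y⟫`, the symplectic condition reads
`φ† J φ = J`, which forces `A J A = J`. Hence `⟪x, J y⟫ = 0` for eigenvectors of `A` whose
eigenvalues have product `≠ 1`, and `J` preserves the fixed space `K` of `A`. The eigenvectors with
`μᵢ > 1`, together with an orthonormal basis of some `L ≤ K` with `L ⟂ J L` and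
`2 dim L = dim K`, then span a Lagrangian on which the bound `∏ max 1 μᵢ` is attained.
-/

namespace Matrix

variable {m n : Type*} [Fintype m] [Fintype n] [DecidableEq m] [DecidableEq n]

lemma det_le_one_of_posSemidef_one_sub {R : Matrix n n ℝ} (hR : R.PosSemidef)
    (h : (1 - R).PosSemidef) : R.det ≤ 1 := by
  rw [hR.isHermitian.det_eq_prod_eigenvalues]
  refine Finset.prod_le_one (fun i _ => hR.eigenvalues_nonneg i) fun i _ => ?_
  set e := hR.isHermitian.eigenvectorBasis i
  have hv : e ⬝ᵥ e = 1 := by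
    have := EuclideanSpace.inner_eq_star_dotProduct e e
    rw [real_inner_self_eq_norm_sq, hR.isHermitian.eigenvectorBasis.orthonormal.1 i] at this
    simpa using this.symm
  have := h.dotProduct_mulVec_nonneg e
  rw [sub_mulVec, one_mulVec, dotProduct_sub, hR.isHermitian.mulVec_eigenvectorBasis,
    dotProduct_smul, smul_eq_mul, star_trivial, hv] at this
  simpa using this

open scoped MatrixOrder in
lemma det_le_det_of_posSemidef_sub {P Q : Matrix n n ℝ} (hP : P.PosSemidef) (hQ : Q.PosDef)
    (hQP : (Q - P).PosSemidef) : P.det ≤ Q.det := by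
  set B := CFC.sqrt Q
  have hBB : B * B = Q := CFC.sqrt_mul_sqrt_self Q hQ.posSemidef.nonneg
  have hBH : B⁻¹ᴴ = B⁻¹ := by
    rw [conjTranspose_nonsing_inv, (nonneg_iff_posSemidef.mp (CFC.sqrt_nonneg Q)).isHermitian.eq]
  have hB : IsUnit B.det := by
    rw [isUnit_iff_ne_zero]
    intro h0
    have := hQ.det_pos
    rw [← hBB, det_mul, h0, zero_mul] at this
    exact lt_irrefl _ this
  set R := B⁻¹ * P * B⁻¹
  have hR : R.PosSemidef := by
    have := hP.mul_mul_conjTranspose_same B⁻¹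
    rwa [hBH] at this
  have h1R : (1 - R).PosSemidef := by
    have heq : 1 - R = B⁻¹ * (Q - P) * B⁻¹ := by
      rw [← hBB, Matrix.mul_sub, Matrix.sub_mul, ← Matrix.mul_assoc, nonsing_inv_mul _ hB,
        Matrix.one_mul, Matrix.mul_nonsing_inv _ hB]
    have := hQP.mul_mul_conjTranspose_same B⁻¹
    rwa [hBH, ← heq] at this
  have hPR : P = B * R * B := by
    simp only [R, ← Matrix.mul_assoc, mul_nonsing_inv _ hB, Matrix.one_mul]
    rw [Matrix.mul_assoc, nonsing_inv_mul _ hB, Matrix.mul_one]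
  clear_value R
  calc P.det = (B * R * B).det := congrArg det hPR
    _ = R.det * Q.det := by rw [← hBB, det_mul, det_mul, det_mul]; ring
    _ ≤ 1 * Q.det := by gcongr; exacts [hQ.det_pos.le, det_le_one_of_posSemidef_one_sub hR h1R]
    _ = Q.det := one_mul _

lemma posSemidef_one_sub_mul_conjTranspose {M : Matrix n m ℝ} (hM : Mᴴ * M = 1) :
    (1 - M * Mᴴ).PosSemidef := by
  have hidem : (1 - M * Mᴴ)ᴴ * (1 - M * Mᴴ) = 1 - M * Mᴴ := by
    simp only [conjTranspose_sub, conjTranspose_one, conjTranspose_mul, conjTranspose_conjTranspose,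
      Matrix.sub_mul, Matrix.mul_sub, Matrix.one_mul, Matrix.mul_one, Matrix.mul_assoc]
    rw [← Matrix.mul_assoc Mᴴ, hM, Matrix.one_mul]
    abel
  exact hidem ▸ posSemidef_conjTranspose_mul_self _

lemma det_one_add_conjTranspose_mul_mul_le {M : Matrix n m ℝ} (hM : Mᴴ * M = 1)
    (S : Matrix n n ℝ) : (1 + Mᴴ * (Sᴴ * S) * M).det ≤ (1 + Sᴴ * S).det := by
  calc (1 + Mᴴ * (Sᴴ * S) * M).det = (1 + S * M * Mᴴ * Sᴴ).det := by
        rw [show Mᴴ * (Sᴴ * S) * M = (Mᴴ * Sᴴ) * (S * M) by simp only [Matrix.mul_assoc],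
          det_one_add_mul_comm]
        simp only [Matrix.mul_assoc]
    _ ≤ (1 + S * Sᴴ).det := by
        refine det_le_det_of_posSemidef_sub ?_ ?_ ?_
        · exact PosSemidef.one.add (by simpa [Matrix.mul_assoc] using
            (posSemidef_self_mul_conjTranspose M).mul_mul_conjTranspose_same S)
        · exact PosDef.one.add_posSemidef (posSemidef_self_mul_conjTranspose S)
        · rw [add_sub_add_left_eq_sub, show S * Sᴴ - S * M * Mᴴ * Sᴴ = S * (1 - M * Mᴴ) * Sᴴ by
            simp only [Matrix.mul_sub, Matrix.sub_mul, Matrix.mul_one, Matrix.mul_assoc]]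
          exact (posSemidef_one_sub_mul_conjTranspose hM).mul_mul_conjTranspose_same S
    _ = (1 + Sᴴ * S).det := det_one_add_mul_comm _ _

lemma det_conjTranspose_mul_diagonal_mul_le {M : Matrix n m ℝ} (hM : Mᴴ * M = 1) {μ : n → ℝ}
    (hμ : 0 ≤ μ) : (Mᴴ * diagonal μ * M).det ≤ ∏ l, max 1 (μ l) := by
  set S := diagonal fun l => √(max 1 (μ l) - 1)
  have hS : 1 + Sᴴ * S = diagonal fun l => max 1 (μ l) := by
    simp only [S]
    rw [← diagonal_one, diagonal_conjTranspose, diagonal_mul_diagonal, diagonal_add]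
    congr 1
    ext l
    simp [Real.mul_self_sqrt (sub_nonneg.2 (le_max_left 1 (μ l)))]
  have hQ : Mᴴ * (diagonal fun l => max 1 (μ l)) * M = 1 + Mᴴ * (Sᴴ * S) * M := by
    rw [← hS, Matrix.mul_add, Matrix.add_mul, Matrix.mul_one, hM]
  calc (Mᴴ * diagonal μ * M).det ≤ (1 + Mᴴ * (Sᴴ * S) * M).det := by
        refine det_le_det_of_posSemidef_sub ((PosSemidef.diagonal hμ).conjTranspose_mul_mul_same M)
          (PosDef.one.add_posSemidef
            ((posSemidef_conjTranspose_mul_self S).conjTranspose_mul_mul_same M)) ?_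
        rw [← hQ, ← Matrix.sub_mul, ← Matrix.mul_sub, diagonal_sub]
        exact PosSemidef.conjTranspose_mul_mul_same
          (PosSemidef.diagonal fun l => sub_nonneg.2 (le_max_right 1 (μ l))) M
    _ ≤ (1 + Sᴴ * S).det := det_one_add_conjTranspose_mul_mul_le hM S
    _ = ∏ l, max 1 (μ l) := by rw [hS, det_diagonal]

end Matrix

theorem Orthonormal.sum_elim {𝕜 E ι κ : Type*} [RCLike 𝕜] [NormedAddCommGroup E]
    [InnerProductSpace 𝕜 E] {u : ι → E} {v : κ → E} (hu : Orthonormal 𝕜 u) (hv : Orthonormal 𝕜 v)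
    (huv : ∀ i j, inner 𝕜 (u i) (v j) = 0) : Orthonormal 𝕜 (Sum.elim u v) := by
  classical
  rw [orthonormal_iff_ite] at hu hv ⊢
  rintro (i | i) (j | j)
  · simpa using hu i j
  · simpa using huv i j
  · simpa using inner_eq_zero_symm.1 (huv j i)
  · simpa using hv i j

section Gram

open Matrix

variable {E F : Type*} [NormedAddCommGroup E] [InnerProductSpace ℝ E] [FiniteDimensional ℝ E]
  [NormedAddCommGroup F] [InnerProductSpace ℝ F]

lemma expansion_eq_absDet_of_forall_le (L : E →ₗ[ℝ] F) {R : Submodule ℝ E}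
    (hR : ∀ S : Submodule ℝ E, absDet (L ∘ₗ S.subtype) ≤ absDet (L ∘ₗ R.subtype)) :
    expansion L = absDet (L ∘ₗ R.subtype) :=
  le_antisymm (ciSup_le hR) (le_ciSup ⟨_, Set.forall_mem_range.2 hR⟩ R)

variable [FiniteDimensional ℝ F] {ι : Type*} [Fintype ι]

lemma nonneg_of_adjoint_apply_apply_eq_smul (φ : E →ₗ[ℝ] F) {x : E} (hx : x ≠ 0) {a : ℝ}
    (h : LinearMap.adjoint φ (φ x) = a • x) : 0 ≤ a := by
  have hnorm : ‖φ x‖ ^ 2 = a * ‖x‖ ^ 2 := by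
    rw [← real_inner_self_eq_norm_sq, ← real_inner_self_eq_norm_sq, ← LinearMap.adjoint_inner_right,
      h, real_inner_smul_right]
  exact nonneg_of_mul_nonneg_left (hnorm ▸ sq_nonneg ‖φ x‖) (by positivity)

lemma gram_comp_orthonormalBasis [DecidableEq ι] (f : OrthonormalBasis ι ℝ E) (L : E →ₗ[ℝ] F) :
    gram ℝ (L ∘ f) = LinearMap.toMatrix f.toBasis f.toBasis (LinearMap.adjoint L ∘ₗ L) := by
  ext i j
  rw [LinearMap.toMatrix_apply, OrthonormalBasis.coe_toBasis_repr_apply,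
    OrthonormalBasis.repr_apply_apply, OrthonormalBasis.coe_toBasis, LinearMap.comp_apply,
    LinearMap.adjoint_inner_right]
  rfl

lemma absDet_eq_sqrt_det_gram_s18 [DecidableEq ι] (f : OrthonormalBasis ι ℝ E) (L : E →ₗ[ℝ] F) :
    absDet L = √(gram ℝ (L ∘ f)).det := by
  change √(gram ℝ (L ∘ stdOrthonormalBasis ℝ E)).det = _
  rw [gram_comp_orthonormalBasis, gram_comp_orthonormalBasis, LinearMap.det_toMatrix,
    LinearMap.det_toMatrix]

lemma absDet_comp_subtype_le (φ : E →ₗ[ℝ] F) (b : OrthonormalBasis ι ℝ E) {μ : ι → ℝ}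
    (hb : ∀ i, LinearMap.adjoint φ (φ (b i)) = μ i • b i) (S : Submodule ℝ E) :
    absDet (φ ∘ₗ S.subtype) ≤ √(∏ i, max 1 (μ i)) := by
  classical
  set x : Fin (finrank ℝ S) → E := S.subtype ∘ stdOrthonormalBasis ℝ S
  set M : Matrix ι (Fin (finrank ℝ S)) ℝ := of fun l i => b.repr (x i) l
  have hM : Mᴴ * M = 1 := by
    rw [← gram_eq_conjTranspose_mul, gram_eq_one_iff_orthonormal]
    exact (stdOrthonormalBasis ℝ S).orthonormal.comp_linearIsometry S.subtypeₗᵢ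
  have hμ : 0 ≤ μ := fun i =>
    nonneg_of_adjoint_apply_apply_eq_smul φ (b.orthonormal.ne_zero i) (hb i)
  have hgram : gram ℝ (φ ∘ x) = Mᴴ * diagonal μ * M := by
    ext i j
    rw [gram_apply, mul_apply, Function.comp_apply, Function.comp_apply,
      ← LinearMap.adjoint_inner_right φ, ← b.sum_inner_mul_inner]
    refine Finset.sum_congr rfl fun l _ => ?_
    rw [LinearMap.adjoint_inner_right φ (b l), ← LinearMap.adjoint_inner_left φ, hb,
      real_inner_smul_left, mul_diagonal, conjTranspose_apply, star_trivial]
    simp only [M, of_apply, b.repr_apply_apply, real_inner_comm (x i)]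
    ring
  calc absDet (φ ∘ₗ S.subtype) = √(gram ℝ (φ ∘ x)).det := rfl
    _ ≤ √(∏ i, max 1 (μ i)) :=
      Real.sqrt_le_sqrt (hgram ▸ det_conjTranspose_mul_diagonal_mul_le hM hμ)

lemma absDet_comp_span_eq [DecidableEq ι] (φ : E →ₗ[ℝ] F) {u : ι → E} (hu : Orthonormal ℝ u)
    {c : ι → ℝ} (hc : ∀ i, LinearMap.adjoint φ (φ (u i)) = c i • u i) :
    absDet (φ ∘ₗ (Submodule.span ℝ (Set.range u)).subtype) = √(∏ i, c i) := by
  let f := (Module.Basis.span hu.linearIndependent).toOrthonormalBasis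
    (by rw [funext (Module.Basis.span_apply hu.linearIndependent)]; exact orthonormal_span hu)
  have hf : ∀ i, (f i : E) = u i := by simp [f]
  have hgram : gram ℝ ((φ ∘ₗ (Submodule.span ℝ (Set.range u)).subtype) ∘ f) = diagonal c := by
    ext i j
    simp only [gram_apply, Function.comp_apply, LinearMap.comp_apply, Submodule.subtype_apply, hf]
    rw [← LinearMap.adjoint_inner_right, hc, real_inner_smul_right, orthonormal_iff_ite.1 hu,
      diagonal_apply]
    split_ifs with h <;> simp [h]
  rw [absDet_eq_sqrt_det_gram_s18 f, hgram, det_diagonal]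

end Gram

section ComplexStructure

variable {E : Type*} [NormedAddCommGroup E] [InnerProductSpace ℝ E] {J : E →ₗ[ℝ] E}

lemma inner_apply_left_eq_neg (hJJ : ∀ x, J (J x) = -x) (hJ : ∀ x y, ⟪J x, J y⟫ = ⟪x, y⟫)
    (x y : E) : ⟪J x, y⟫ = -⟪x, J y⟫ := by
  rw [← hJ x (J y), hJJ, inner_neg_right, neg_neg]

lemma inner_self_apply_eq_zero (hJJ : ∀ x, J (J x) = -x) (hJ : ∀ x y, ⟪J x, J y⟫ = ⟪x, y⟫)
    (x : E) : ⟪x, J x⟫ = 0 := by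
  have h := inner_apply_left_eq_neg hJJ hJ x x
  rw [real_inner_comm] at h
  linarith

lemma isOrtho_map_comm (hJJ : ∀ x, J (J x) = -x) (hJ : ∀ x y, ⟪J x, J y⟫ = ⟪x, y⟫)
    {U V : Submodule ℝ E} : U ⟂ V.map J ↔ V ⟂ U.map J := by
  suffices ∀ U V : Submodule ℝ E, U ⟂ V.map J → V ⟂ U.map J from ⟨this U V, this V U⟩
  intro U V h
  rw [Submodule.isOrtho_iff_inner_eq] at h ⊢
  rintro v hv _ ⟨u, hu, rfl⟩
  rw [real_inner_comm, inner_apply_left_eq_neg hJJ hJ, h u hu _ (Submodule.mem_map_of_mem hv),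
    neg_zero]

lemma inner_apply_eq_zero_of_mem_span {κ : Type*} {u : κ → E}
    (hu : ∀ k l, ⟪u k, J (u l)⟫ = 0) {x y : E} (hx : x ∈ Submodule.span ℝ (Set.range u))
    (hy : y ∈ Submodule.span ℝ (Set.range u)) : ⟪x, J y⟫ = 0 := by
  have h : Submodule.span ℝ (Set.range u) ⟂ (Submodule.span ℝ (Set.range u)).map J := by
    rw [Submodule.map_span, ← Set.range_comp, Submodule.isOrtho_span]
    rintro _ ⟨k, rfl⟩ _ ⟨l, rfl⟩
    exact hu k l
  exact Submodule.isOrtho_iff_inner_eq.1 h x hx (J y) (Submodule.mem_map_of_mem hy)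

variable [FiniteDimensional ℝ E]

lemma two_mul_card_le_finrank_of_isotropic (hJ : ∀ x y, ⟪J x, J y⟫ = ⟪x, y⟫) {κ : Type*}
    [Fintype κ] {u : κ → E} (hu : Orthonormal ℝ u) (hiso : ∀ k l, ⟪u k, J (u l)⟫ = 0) :
    2 * Fintype.card κ ≤ finrank ℝ E := by
  classical
  have hJu : Orthonormal ℝ (J ∘ u) := by
    rw [orthonormal_iff_ite] at hu ⊢
    intro k l
    rw [Function.comp_apply, Function.comp_apply, hJ, hu]
  have h := (hu.sum_elim hJu hiso).linearIndependent.fintype_card_le_finrank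
  rwa [Fintype.card_sum, ← two_mul] at h

/-- A maximal `L ≤ K` with `L ⟂ J L` fills `K` together with `J L`: a vector of `K` orthogonal to
both could be added to `L`. -/
lemma exists_isotropic_two_mul_finrank_eq (hJJ : ∀ x, J (J x) = -x)
    (hJ : ∀ x y, ⟪J x, J y⟫ = ⟪x, y⟫) (K : Submodule ℝ E) (hK : ∀ x ∈ K, J x ∈ K) :
    ∃ L ≤ K, L ⟂ L.map J ∧ 2 * finrank ℝ L = finrank ℝ K := by
  obtain ⟨L, ⟨hLK, hL⟩, hmax⟩ := exists_maximal_of_wellFoundedGT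
    (fun L : Submodule ℝ E => L ≤ K ∧ L ⟂ L.map J) ⟨⊥, bot_le, Submodule.isOrtho_bot_left⟩
  have hMK : L ⊔ L.map J ≤ K :=
    sup_le hLK (Submodule.map_le_iff_le_comap.2 fun x hx => hK x (hLK hx))
  have hMperp : (L ⊔ L.map J)ᗮ ⊓ K = ⊥ := by
    refine (Submodule.eq_bot_iff _).2 fun x ⟨hxM, hxK⟩ => ?_
    have hx : Submodule.span ℝ {x} ⟂ L ∧ Submodule.span ℝ {x} ⟂ L.map J :=
      Submodule.isOrtho_sup_right.1 ((Submodule.span_singleton_le_iff_mem _ _).2 hxM)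
    have hxL : Submodule.span ℝ {x} ≤ L := by
      refine le_sup_right.trans (hmax ⟨sup_le hLK ((Submodule.span_singleton_le_iff_mem _ _).2 hxK),
        ?_⟩ le_sup_left)
      rw [Submodule.map_sup, Submodule.isOrtho_sup_left, Submodule.isOrtho_sup_right,
        Submodule.isOrtho_sup_right]
      refine ⟨⟨hL, (isOrtho_map_comm hJJ hJ).2 hx.2⟩, hx.2, ?_⟩
      rw [Submodule.map_span, Set.image_singleton, Submodule.isOrtho_span]
      simpa using inner_self_apply_eq_zero hJJ hJ x
    have hxx := Submodule.isOrtho_iff_inner_eq.1 hx.1 x (Submodule.mem_span_singleton_self x) x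
      (hxL (Submodule.mem_span_singleton_self x))
    exact inner_self_eq_zero.1 hxx
  have hJinj : Function.Injective J := fun x y h => by simpa [hJJ] using congrArg J h
  have hM := Submodule.finrank_add_inf_finrank_orthogonal hMK
  have hsup := Submodule.finrank_sup_add_finrank_inf_eq L (L.map J)
  have hmap := (Submodule.equivMapOfInjective J hJinj L).finrank_eq
  rw [hMperp, finrank_bot] at hM
  rw [hL.disjoint.eq_bot, finrank_bot] at hsup
  exact ⟨L, hLK, hL, by omega⟩

end ComplexStructure

lemma prod_subtype_one_lt_eq_prod_max {ι : Type*} [Fintype ι] (μ : ι → ℝ) :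
    ∏ i : {i // 1 < μ i}, μ i = ∏ i, max 1 (μ i) := by
  classical
  rw [← Finset.prod_subtype (Finset.univ.filter (1 < μ ·)) (by simp), Finset.prod_filter]
  refine Finset.prod_congr rfl fun i _ => ?_
  split_ifs with h
  exacts [(max_eq_right h.le).symm, (max_eq_left (not_lt.1 h)).symm]

lemma card_subtype_lt_add_card_subtype_gt_add_card_subtype_eq {ι α : Type*} [Fintype ι]
    [LinearOrder α] (f : ι → α) (t : α) :
    Fintype.card {i // t < f i} + Fintype.card {i // f i < t} + Fintype.card {i // f i = t} =
      Fintype.card ι := by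
  rw [Fintype.card_subtype, Fintype.card_subtype, Fintype.card_subtype, Finset.card_filter,
    Finset.card_filter, Finset.card_filter, ← Finset.sum_add_distrib, ← Finset.sum_add_distrib,
    ← Finset.card_univ, Finset.card_eq_sum_ones]
  refine Finset.sum_congr rfl fun i _ => ?_
  rcases lt_trichotomy (f i) t with h | h | h
  · simp [h, h.ne, h.not_gt]
  · simp [h]
  · simp [h, h.ne', h.not_gt]

section Symplectic

variable {E : Type*} [NormedAddCommGroup E] [InnerProductSpace ℝ E] {J A : Module.End ℝ E}

lemma LinearMap.IsSymmetric.inner_eq_zero_of_apply_eq_smul (hA : A.IsSymmetric) {x y : E}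
    {a c : ℝ} (hx : A x = a • x) (hy : A y = c • y) (hac : a ≠ c) : ⟪x, y⟫ = 0 := by
  have h : a * ⟪x, y⟫ = c * ⟪x, y⟫ := by
    rw [← real_inner_smul_left, ← hx, hA, hy, real_inner_smul_right]
  exact (mul_eq_mul_right_iff.1 h).resolve_left hac

lemma inner_apply_eq_zero_of_apply_eq_smul (hA : A.IsSymmetric) (hAJA : A * J * A = J) {x y : E}
    {a c : ℝ} (hx : A x = a • x) (hy : A y = c • y) (hac : a * c ≠ 1) : ⟪x, J y⟫ = 0 := by
  have h : (a * c) * ⟪x, J y⟫ = 1 * ⟪x, J y⟫ := by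
    calc (a * c) * ⟪x, J y⟫ = ⟪A x, J (A y)⟫ := by
          rw [hx, hy, map_smul, real_inner_smul_left, real_inner_smul_right]; ring
      _ = ⟪x, (A * J * A) y⟫ := hA _ _
      _ = 1 * ⟪x, J y⟫ := by rw [hAJA, one_mul]
  exact (mul_eq_mul_right_iff.1 h).resolve_left hac

lemma orthonormal_isotropic_sum_elim (hA : A.IsSymmetric) (hAJA : A * J * A = J) {ι κ : Type*}
    [Fintype ι] (b : OrthonormalBasis ι ℝ E) {μ : ι → ℝ} (hb : ∀ i, A (b i) = μ i • b i)
    {p : ι → Prop} (hp : ∀ i j, p i → p j → μ i * μ j ≠ 1) {v : κ → E} (hv : Orthonormal ℝ v)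
    (hvA : ∀ k, A (v k) = v k) (hvJ : ∀ k l, ⟪v k, J (v l)⟫ = 0) :
    Orthonormal ℝ (Sum.elim (fun i : {i // p i} => b i) v) ∧
      ∀ k l, ⟪Sum.elim (fun i : {i // p i} => b i) v k,
        J (Sum.elim (fun i : {i // p i} => b i) v l)⟫ = 0 := by
  have hne : ∀ i, p i → μ i ≠ 1 := fun i hi h => hp i i hi hi (by rw [h, one_mul])
  have hvA' : ∀ k, A (v k) = (1 : ℝ) • v k := fun k => by rw [one_smul, hvA]
  refine ⟨(b.orthonormal.comp _ Subtype.val_injective).sum_elim hv fun i k =>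
    hA.inner_eq_zero_of_apply_eq_smul (hb i) (hvA' k) (hne i i.2), ?_⟩
  rintro (i | k) (j | l)
  · exact inner_apply_eq_zero_of_apply_eq_smul hA hAJA (hb i) (hb j) (hp i j i.2 j.2)
  · exact inner_apply_eq_zero_of_apply_eq_smul hA hAJA (hb i) (hvA' l)
      (by rw [mul_one]; exact hne i i.2)
  · exact inner_apply_eq_zero_of_apply_eq_smul hA hAJA (hvA' k) (hb j)
      (by rw [one_mul]; exact hne j j.2)
  · exact hvJ k l

variable [FiniteDimensional ℝ E]

lemma adjoint_mul_self_mul_mul_self_eq (hJJ : J * J = -1) {φ : Module.End ℝ E}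
    (hφ : LinearMap.adjoint φ * J * φ = J) :
    LinearMap.adjoint φ * φ * J * (LinearMap.adjoint φ * φ) = J := by
  set ψ := LinearMap.adjoint φ
  -- `-J ψ J` is a left inverse of `φ`, hence also a right inverse; this gives `φ J ψ = J`.
  have hleft : -(J * ψ * J) * φ = 1 := by
    rw [show -(J * ψ * J) * φ = -(J * (ψ * J * φ)) by noncomm_ring, hφ, hJJ, neg_neg]
  have hφJψ : φ * J * ψ = J := by
    calc φ * J * ψ = φ * -(J * ψ * J) * J := by
          rw [show φ * -(J * ψ * J) * J = -(φ * J * ψ * (J * J)) by noncomm_ring, hJJ]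
          noncomm_ring
      _ = J := by rw [mul_eq_one_comm.mp hleft, one_mul]
  rw [show ψ * φ * J * (ψ * φ) = ψ * (φ * J * ψ) * φ by noncomm_ring, hφJψ, hφ]

lemma exists_isotropic_eigenfamily (hJJ : ∀ x, J (J x) = -x) (hJ : ∀ x y, ⟪J x, J y⟫ = ⟪x, y⟫)
    (hA : A.IsSymmetric) (hAJA : A * J * A = J) {n : ℕ} (hE : finrank ℝ E = 2 * n) {ι : Type*}
    [Fintype ι] (b : OrthonormalBasis ι ℝ E) {μ : ι → ℝ} (hμ : 0 ≤ μ)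
    (hb : ∀ i, A (b i) = μ i • b i) :
    ∃ (m : ℕ) (u : {i // 1 < μ i} ⊕ Fin m → E), Orthonormal ℝ u ∧
      (∀ k, A (u k) = Sum.elim (fun i : {i // 1 < μ i} => μ i) 1 k • u k) ∧
      (∀ k l, ⟪u k, J (u l)⟫ = 0) ∧ Fintype.card {i // 1 < μ i} + m = n := by
  set K := LinearMap.ker (A - 1)
  have hKmem : ∀ x, x ∈ K ↔ A x = x := fun x => by simp [K, sub_eq_zero]
  have hKJ : ∀ x ∈ K, J x ∈ K := fun x hx => by
    rw [hKmem] at hx ⊢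
    calc A (J x) = (A * J * A) x := by rw [Module.End.mul_apply, Module.End.mul_apply, hx]
      _ = J x := by rw [hAJA]
  obtain ⟨L, hLK, hLJ, hL⟩ := exists_isotropic_two_mul_finrank_eq hJJ hJ K hKJ
  set e := stdOrthonormalBasis ℝ L
  have heA : ∀ k, A (e k) = e k := fun k => (hKmem _).1 (hLK (e k).2)
  have heJ : ∀ k l, ⟪(e k : E), J (e l)⟫ = 0 := fun k l =>
    Submodule.isOrtho_iff_inner_eq.1 hLJ _ (e k).2 _ (Submodule.mem_map_of_mem (e l).2)
  have he := e.orthonormal.comp_linearIsometry L.subtypeₗᵢ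
  obtain ⟨huP, hisoP⟩ := orthonormal_isotropic_sum_elim hA hAJA b hb (p := (1 < μ ·))
    (fun i j hi hj => (one_lt_mul hi.le hj).ne') he heA heJ
  obtain ⟨huN, hisoN⟩ := orthonormal_isotropic_sum_elim hA hAJA b hb (p := (μ · < 1))
    (fun i j hi hj => (mul_lt_one_of_nonneg_of_lt_one_left (hμ i) hi hj.le).ne) he heA heJ
  -- Both families span isotropic subspaces, so each has at most `n` vectors, while together
  -- they have at least `2 n` since `μ = 1` has multiplicity at most `dim K = 2 dim L`.
  have hP := two_mul_card_le_finrank_of_isotropic hJ huP hisoP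
  have hN := two_mul_card_le_finrank_of_isotropic hJ huN hisoN
  have hK : Fintype.card {i // μ i = 1} ≤ finrank ℝ K := by
    let w : {i // μ i = 1} → K := fun i => ⟨b i, (hKmem _).2 (by rw [hb, i.2, one_smul])⟩
    have hw : LinearIndependent ℝ (K.subtype ∘ w) :=
      b.orthonormal.linearIndependent.comp _ Subtype.val_injective
    exact (LinearIndependent.of_comp _ hw).fintype_card_le_finrank
  have hcount := card_subtype_lt_add_card_subtype_gt_add_card_subtype_eq μ 1
  rw [← finrank_eq_card_basis b.toBasis, hE] at hcount
  rw [Fintype.card_sum, Fintype.card_fin] at hP hN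
  refine ⟨_, _, huP, ?_, hisoP, by omega⟩
  rintro (i | k)
  · exact hb i
  · simpa using heA k

end Symplectic

theorem exists_lagrangian_realizing_expansion_general
    {E : Type*} [NormedAddCommGroup E] [InnerProductSpace ℝ E] [FiniteDimensional ℝ E]
    {n : ℕ} (hE : finrank ℝ E = 2 * n)
    (ω : E →ₗ[ℝ] E →ₗ[ℝ] ℝ)
    (J : E →ₗ[ℝ] E)
    (hJ2 : J ∘ₗ J = -LinearMap.id)
    (hJcompat : ∀ v w, ω (J v) (J w) = ω v w)
    (hg : ∀ v w : E, ⟪v, w⟫ = ω v (J w))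
    (φ : E →ₗ[ℝ] E)
    (hφsympl : ∀ v w, ω (φ v) (φ w) = ω v w) :
    ∃ R : Submodule ℝ E, finrank ℝ R = n ∧
      (∀ x ∈ R, ∀ y ∈ R, ω x y = 0) ∧
      absDet (φ ∘ₗ R.subtype) = expansion φ := by
  have hJJ : ∀ x, J (J x) = -x := fun x => by simpa using LinearMap.congr_fun hJ2 x
  have hω : ∀ x y, ω x y = -⟪x, J y⟫ := fun x y => by rw [hg, hJJ, map_neg, neg_neg]
  have hJ : ∀ x y, ⟪J x, J y⟫ = ⟪x, y⟫ := fun x y => by rw [hg, hJcompat, ← hg]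
  have hφJ : LinearMap.adjoint φ * J * φ = J := by
    ext x
    refine ext_inner_right ℝ fun y => ?_
    rw [Module.End.mul_apply, Module.End.mul_apply, LinearMap.adjoint_inner_left,
      inner_apply_left_eq_neg hJJ hJ, inner_apply_left_eq_neg hJJ hJ, ← hω, ← hω, hφsympl]
  have hA := LinearMap.isSymmetric_adjoint_mul_self φ
  set b := hA.eigenvectorBasis hE
  set μ := hA.eigenvalues hE
  have hb : ∀ i, (LinearMap.adjoint φ * φ) (b i) = μ i • b i := hA.apply_eigenvectorBasis hE
  obtain ⟨m, u, hu, huA, huJ, hcard⟩ := exists_isotropic_eigenfamily hJJ hJ hA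
    (adjoint_mul_self_mul_mul_self_eq hJ2 hφJ) hE b
    (fun i => nonneg_of_adjoint_apply_apply_eq_smul φ (b.orthonormal.ne_zero i) (hb i)) hb
  have hR : absDet (φ ∘ₗ (Submodule.span ℝ (Set.range u)).subtype) = √(∏ i, max 1 (μ i)) := by
    rw [absDet_comp_span_eq φ hu huA, Fintype.prod_sum_type]
    simp [prod_subtype_one_lt_eq_prod_max]
  refine ⟨Submodule.span ℝ (Set.range u), ?_, fun x hx y hy => ?_, ?_⟩
  · rw [finrank_span_eq_card hu.linearIndependent, Fintype.card_sum, Fintype.card_fin, hcard]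
  · rw [hω, inner_apply_eq_zero_of_mem_span huJ hx hy, neg_zero]
  · exact (expansion_eq_absDet_of_forall_le φ fun S => hR ▸ absDet_comp_subtype_le φ b hb S).symm

/-- For a symplectic map `φ` on a `2n`-dimensional symplectic vector space `(E, ω)` with
compatible complex structure `J` inducing the inner product `⟪v,w⟫ = ω(v, Jw)`, there is
an `n`-dimensional Lagrangian subspace `R` realizing the maximal expansion:
`|det(φ|_R)| = ex(φ)`. -/
theorem exists_lagrangian_realizing_expansion
    {E : Type*} [NormedAddCommGroup E] [InnerProductSpace ℝ E] [FiniteDimensional ℝ E]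
    {n : ℕ} (hE : finrank ℝ E = 2 * n)
    (ω : E →ₗ[ℝ] E →ₗ[ℝ] ℝ)
    (halt : ∀ v, ω v v = 0)
    (hnondeg : ∀ v, (∀ w, ω v w = 0) → v = 0)
    (J : E →ₗ[ℝ] E)
    (hJ2 : J ∘ₗ J = -LinearMap.id)
    (hJcompat : ∀ v w, ω (J v) (J w) = ω v w)
    (hg : ∀ v w : E, ⟪v, w⟫ = ω v (J w))
    (φ : E →ₗ[ℝ] E)
    (hφbij : Function.Bijective φ)
    (hφsympl : ∀ v w, ω (φ v) (φ w) = ω v w) :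
    ∃ R : Submodule ℝ E, finrank ℝ R = n ∧
      (∀ x ∈ R, ∀ y ∈ R, ω x y = 0) ∧
      absDet (φ ∘ₗ R.subtype) = expansion φ :=
  exists_lagrangian_realizing_expansion_general hE ω J hJ2 hJcompat hg φ hφsympl
end
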